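/- Let m, j, l be positive integers with l ≥ j ≥ 2, and let C_0, …, C_j be defined by ∏_{i=1}^j (l+k+m−j+i) = C_0 + Σ_{i=1}^j C_i ∏_{λ=0}^{i−1}(k+m−λ). Set Q_{j−1} = (m!/((j−1+m)!)) · [(l+j−1+m)!/((l−1+m)!) − ((j+m)!·(l+m))/((1+m)!)]. Then Q_{j−1} − Σ_{i=0}^{j−2} C_i · m!/((j−i−1+m)!) = m(j−1)(l−1)/(m+1). -/

import Mathlib

/-!
Comparing the coefficients of `k^j` and `k^{j-1}` in the defining identity gives `C_j = 1` and
`C_{j-1} = j l`. Evaluating it at `k = j - 1` turns both sides into factorial quotients,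
`(l+j-1+m)!/(l-1+m)! = Σ_{i ≤ j} C_i (j-1+m)!/(j-1+m-i)!`, whose terms with `i ≤ j - 2` are, up to
the factor `(j-1+m)!/m!`, those subtracted in `Θ`. What is left is
`Θ = C_{j-1} + m C_j - (j+m)(l+m)/(m+1) = j l + m - (j+m)(l+m)/(m+1)`.
-/

open Finset Polynomial
open scoped Nat

namespace Polynomial

variable {R : Type*} [CommRing R]

theorem eq_of_eval_natCast_eq [IsDomain R] [CharZero R] {p q : R[X]}
    (h : ∀ k : ℕ, p.eval (k : R) = q.eval (k : R)) : p = q :=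
  eq_of_infinite_eval_eq p q <| (Set.infinite_range_of_injective Nat.cast_injective).mono <| by
    rintro _ ⟨k, rfl⟩
    exact h k

theorem coeff_card_prod_X_add_C {ι : Type*} (s : Finset ι) (r : ι → R) :
    (∏ i ∈ s, (X + C (r i))).coeff #s = 1 := by
  simp [Finset.prod_X_add_C_coeff s r le_rfl]

theorem coeff_prod_X_add_C_of_card_eq_succ {ι : Type*} (s : Finset ι) (r : ι → R) {n : ℕ}
    (h : #s = n + 1) : (∏ i ∈ s, (X + C (r i))).coeff n = ∑ i ∈ s, r i := by
  simp [Finset.prod_X_add_C_coeff s r (k := n) (by omega), h, powersetCard_one]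

theorem coeff_prod_X_add_C_of_card_lt {ι : Type*} (s : Finset ι) (r : ι → R) {d : ℕ}
    (h : #s < d) : (∏ i ∈ s, (X + C (r i))).coeff d = 0 := by
  refine coeff_eq_zero_of_natDegree_lt (lt_of_le_of_lt (natDegree_prod_le s _) ?_)
  refine lt_of_le_of_lt
    (sum_le_card_nsmul _ _ 1 fun i _ => natDegree_add_C.trans_le natDegree_X_le) ?_
  simpa using h

theorem coeff_sum_C_mul_prod_range_X_add_C_of_le (a c : ℕ → R) {n d : ℕ} (h : n ≤ d) :
    (∑ i ∈ range n, C (c i) * ∏ x ∈ range i, (X + C (a x))).coeff d = 0 := by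
  rw [finsetSum_coeff]
  refine sum_eq_zero fun i hi => ?_
  rw [coeff_C_mul, coeff_prod_X_add_C_of_card_lt _ _ (by simp at hi; simp; omega), mul_zero]

theorem newton_coeffs_of_prod_X_add_C_eq {ι : Type*} (s : Finset ι) (b : ι → R) (a c : ℕ → R)
    {n : ℕ} (hs : #s = n + 1)
    (h : ∏ i ∈ s, (X + C (b i)) = ∑ i ∈ range (n + 2), C (c i) * ∏ x ∈ range i, (X + C (a x))) :
    c (n + 1) = 1 ∧ c n + c (n + 1) * ∑ x ∈ range (n + 1), a x = ∑ i ∈ s, b i := by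
  have hlead : (∏ i ∈ s, (X + C (b i))).coeff (n + 1) = 1 := hs ▸ coeff_card_prod_X_add_C s b
  have hself : ∀ k, (∏ x ∈ range k, (X + C (a x))).coeff k = 1 := fun k => by
    simpa using coeff_card_prod_X_add_C (range k) a
  have hn1 := congrArg (coeff · (n + 1)) h
  have hn := congrArg (coeff · n) h
  simp only [sum_range_succ _ (n + 1), sum_range_succ _ n, coeff_add, coeff_C_mul] at hn hn1
  rw [hlead, coeff_sum_C_mul_prod_range_X_add_C_of_le _ _ (by omega), hself,
    coeff_prod_X_add_C_of_card_lt _ _ (by simp)] at hn1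
  rw [coeff_prod_X_add_C_of_card_eq_succ s b hs,
    coeff_sum_C_mul_prod_range_X_add_C_of_le _ _ le_rfl, hself,
    coeff_prod_X_add_C_of_card_eq_succ _ a (card_range _)] at hn
  constructor
  · linear_combination -hn1
  · linear_combination -hn

end Polynomial

namespace Nat

theorem factorial_mul_prod_Icc_add {K : Type*} [CommSemiring K] (b n : ℕ) :
    (b ! : K) * ∏ i ∈ Icc 1 n, ((b : K) + i) = ((b + n)! : K) := by
  induction n with
  | zero => simp
  | succ n ih =>
    rw [prod_Icc_succ_top (by omega), ← mul_assoc, ih, ← add_assoc, factorial_succ]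
    push_cast
    ring

theorem factorial_sub_mul_prod_range_sub {K : Type*} [CommRing K] {a i : ℕ} (h : i ≤ a) :
    ((a - i)! : K) * ∏ x ∈ range i, ((a : K) - x) = (a ! : K) := by
  have hdesc : ∏ x ∈ range i, ((a : K) - x) = (a.descFactorial i : K) := by
    rw [descFactorial_eq_prod_range, cast_prod]
    exact prod_congr rfl fun x hx => (cast_sub (by simp at hx; omega)).symm
  rw [hdesc, ← cast_mul, factorial_mul_descFactorial h]

end Nat

theorem sum_Icc_add_eq_sum_range_sub_add {R : Type*} [CommRing R] (a b : R) (n : ℕ) :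
    ∑ i ∈ Icc 1 n, (a + i) = ∑ x ∈ range n, (b - x) + n * (a - b + n) := by
  induction n with
  | zero => simp
  | succ n ih =>
    rw [sum_Icc_succ_top (by omega), ih, sum_range_succ]
    push_cast
    ring

theorem sum_range_succ_eq_add_sum_Icc {M : Type*} [AddCommMonoid M] (f : ℕ → M) (n : ℕ) :
    ∑ i ∈ range (n + 1), f i = f 0 + ∑ i ∈ Icc 1 n, f i := by
  rw [range_eq_Ico, sum_eq_sum_Ico_succ_bot (by omega)]
  rfl

section NewtonExpansion

variable {m j l : ℕ} {c : ℕ → ℂ}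

theorem prod_X_add_C_eq_newton_sum
    (hc : ∀ k : ℕ, ∏ i ∈ Icc 1 j, ((l : ℂ) + k + m - j + i)
      = c 0 + ∑ i ∈ Icc 1 j, c i * ∏ x ∈ range i, ((k : ℂ) + m - x)) :
    ∏ i ∈ Icc 1 j, (X + C ((l : ℂ) + m - j + i))
      = ∑ i ∈ range (j + 1), C (c i) * ∏ x ∈ range i, (X + C ((m : ℂ) - x)) := by
  refine eq_of_eval_natCast_eq fun k => ?_
  simp only [eval_prod, eval_finsetSum, eval_mul, eval_add, eval_X, eval_C,
    sum_range_succ_eq_add_sum_Icc, range_zero, prod_empty, mul_one]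
  rw [prod_congr rfl fun (i : ℕ) _ =>
    show (k : ℂ) + (l + m - j + (i : ℂ)) = l + k + m - j + i by ring, hc k]
  simp_rw [add_sub_assoc]

theorem newton_coeff_self_and_pred (hj : 0 < j)
    (hc : ∀ k : ℕ, ∏ i ∈ Icc 1 j, ((l : ℂ) + k + m - j + i)
      = c 0 + ∑ i ∈ Icc 1 j, c i * ∏ x ∈ range i, ((k : ℂ) + m - x)) :
    c j = 1 ∧ c (j - 1) = j * l := by
  obtain ⟨n, rfl⟩ : ∃ n, j = n + 1 := ⟨j - 1, by omega⟩
  obtain ⟨htop, hsub⟩ := newton_coeffs_of_prod_X_add_C_eq _ _ _ _ (by simp)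
    (prod_X_add_C_eq_newton_sum hc)
  refine ⟨htop, ?_⟩
  rw [sum_Icc_add_eq_sum_range_sub_add _ (m : ℂ), htop] at hsub
  push_cast at hsub ⊢
  linear_combination hsub

theorem factorial_eq_mul_newton_sum (hj : 0 < j) (hl : 0 < l)
    (hc : ∀ k : ℕ, ∏ i ∈ Icc 1 j, ((l : ℂ) + k + m - j + i)
      = c 0 + ∑ i ∈ Icc 1 j, c i * ∏ x ∈ range i, ((k : ℂ) + m - x)) :
    ((l + j - 1 + m)! : ℂ)
      = (l - 1 + m)! * ∑ i ∈ range (j + 1), c i * ∏ x ∈ range i, (((j - 1 + m : ℕ) : ℂ) - x) := by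
  rw [show l + j - 1 + m = l - 1 + m + j by omega, ← Nat.factorial_mul_prod_Icc_add,
    sum_range_succ_eq_add_sum_Icc]
  simp only [range_zero, prod_empty, mul_one, Nat.cast_add]
  congr 1
  rw [← hc (j - 1)]
  refine prod_congr rfl fun i _ => ?_
  push_cast [Nat.cast_sub hl, Nat.cast_sub hj]
  ring

theorem theta_closed_form_of_newton_coeffs (hm : 0 < m) (hj : 0 < j) (htop : c j = 1)
    (hsub : c (j - 1) = j * l)
    (heval : ((l + j - 1 + m)! : ℂ)
      = (l - 1 + m)! * ∑ i ∈ range (j + 1), c i * ∏ x ∈ range i, (((j - 1 + m : ℕ) : ℂ) - x)) :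
    ((m ! : ℂ) / ((j - 1 + m)! : ℂ)) *
        (((l + j - 1 + m)! : ℂ) / ((l - 1 + m)! : ℂ)
          - ((j + m)! : ℂ) * ((l : ℂ) + m) / ((1 + m)! : ℂ))
      - ∑ i ∈ range (j - 1), c i * ((m ! : ℂ) / ((j - i - 1 + m)! : ℂ))
    = (m : ℂ) * ((j : ℂ) - 1) * ((l : ℂ) - 1) / ((m : ℂ) + 1) := by
  set N := j - 1 + m with hN
  set P : ℕ → ℂ := fun i => ∏ x ∈ range i, ((N : ℂ) - x)
  have hfac : ∀ n, (n ! : ℂ) ≠ 0 := fun n => Nat.cast_ne_zero.mpr n.factorial_ne_zero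
  have hPfac : ∀ i ≤ N, ((N - i)! : ℂ) * P i = N ! := fun _ hi =>
    Nat.factorial_sub_mul_prod_range_sub hi
  have hlow : ∑ i ∈ range (j - 1), c i * ((m ! : ℂ) / ((j - i - 1 + m)! : ℂ))
      = m ! / N ! * ∑ i ∈ range (j - 1), c i * P i := by
    rw [mul_sum]
    refine sum_congr rfl fun i hi => ?_
    have h := hPfac i (by simp at hi; omega)
    rw [show j - i - 1 + m = N - i by simp at hi; omega]
    have := hfac (N - i)
    have := hfac N
    field_simp
    linear_combination -(c i * m !) * h
  have hsplit : ∑ i ∈ range (j + 1), c i * P i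
      = ∑ i ∈ range (j - 1), c i * P i + c (j - 1) * P (j - 1) + c j * P j := by
    rw [show j + 1 = j - 1 + 1 + 1 by omega, sum_range_succ, sum_range_succ,
      show j - 1 + 1 = j by omega]
  have hPj1 : (m ! : ℂ) * P (j - 1) = N ! := by
    simpa [show N - (j - 1) = m by omega] using hPfac (j - 1) (by omega)
  have hPj : (m ! : ℂ) * P j = m * N ! := by
    rw [← Nat.mul_factorial_pred hm.ne', Nat.cast_mul, mul_assoc, ← hPfac j (by omega),
      show N - j = m - 1 by omega]
  have hjm : ((j + m)! : ℂ) = (j + m) * N ! := by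
    rw [show j + m = N + 1 by omega, Nat.factorial_succ]
    push_cast [hN, Nat.cast_sub hj]
    ring
  have h1m : ((1 + m)! : ℂ) = (m + 1) * m ! := by
    rw [add_comm, Nat.factorial_succ]
    push_cast
    ring
  rw [hlow, heval, hsplit, htop, hsub, hjm, h1m]
  have hm1 : (m : ℂ) + 1 ≠ 0 := by exact_mod_cast m.succ_ne_zero
  have := hfac (l - 1 + m)
  have := hfac N
  have := hfac m
  field_simp
  linear_combination ((m : ℂ) + 1) * (j * l * hPj1 + hPj)

end NewtonExpansion

theorem stmt8 (m j l : ℕ) (hm : 0 < m) (hj : 2 ≤ j) (hl : j ≤ l) (C : ℕ → ℂ)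
    (hC : ∀ k : ℕ, ∏ i ∈ Finset.Icc 1 j, ((l : ℂ) + k + m - j + i)
      = C 0 + ∑ i ∈ Finset.Icc 1 j, C i * ∏ x ∈ Finset.range i, ((k : ℂ) + m - x)) :
    ((Nat.factorial m : ℂ) / (Nat.factorial (j - 1 + m) : ℂ)) *
        ((Nat.factorial (l + j - 1 + m) : ℂ) / (Nat.factorial (l - 1 + m) : ℂ)
          - ((Nat.factorial (j + m) : ℂ) * ((l : ℂ) + m)) / (Nat.factorial (1 + m) : ℂ))
      - ∑ i ∈ Finset.range (j - 1),
          C i * ((Nat.factorial m : ℂ) / (Nat.factorial (j - i - 1 + m) : ℂ))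
    = (m : ℂ) * ((j : ℂ) - 1) * ((l : ℂ) - 1) / ((m : ℂ) + 1) := by
  obtain ⟨htop, hsub⟩ := newton_coeff_self_and_pred (by omega) hC
  exact theta_closed_form_of_newton_coeffs hm (by omega) htop hsub
    (factorial_eq_mul_newton_sum (by omega) (by omega) hC)
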